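/- arXiv:1704.08072 — 2 statements merged into one kernel-verified Lean document; each statement's English description precedes it below -/
import Mathlib

section
/- If x ∈ ℝ^n is a solution of x = α R(x ⊗ x) + (1-α)v, then 1ᵀx = 1 or 1ᵀx = (1-α)/α. -/
/-! Summing the fixed-point equation coordinatewise: the column sums of `R` are `1`, so
`1ᵀ R (x ⊗ x) = 1ᵀ (x ⊗ x) = (1ᵀ x)²`, and `1ᵀ v = 1`. Hence `s = 1ᵀ x` satisfies
`α s² - s + (1 - α) = 0`, i.e. `(s - 1) (α s - (1 - α)) = 0`. -/

noncomputable def Gmap (n : ℕ) (α : ℝ) (v : Fin n → ℝ)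
    (R : Matrix (Fin n) (Fin n × Fin n) ℝ) (x : Fin n → ℝ) : Fin n → ℝ :=
  α • R.mulVec (fun p => x p.1 * x p.2) + (1 - α) • v

open Matrix in
theorem Matrix.sum_mulVec_of_sum_col_eq_one {m n R : Type*} [Fintype m] [Fintype n]
    [NonAssocSemiring R] {M : Matrix m n R} (hM : ∀ j, ∑ i, M i j = 1) (y : n → R) :
    ∑ i, (M *ᵥ y) i = ∑ j, y j := by
  simp only [Matrix.mulVec, dotProduct]
  rw [Finset.sum_comm]
  simp [← Finset.sum_mul, hM]

theorem sum_prod_mul_eq_sq {ι R : Type*} [Fintype ι] [CommSemiring R] (x : ι → R) :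
    ∑ p : ι × ι, x p.1 * x p.2 = (∑ i, x i) ^ 2 := by
  rw [sq, Fintype.sum_mul_sum, Fintype.sum_prod_type]

theorem sum_Gmap {n : ℕ} (α : ℝ) (v : Fin n → ℝ) (hv1 : ∑ i, v i = 1)
    {R : Matrix (Fin n) (Fin n × Fin n) ℝ} (hRs : ∀ j, ∑ i, R i j = 1) (x : Fin n → ℝ) :
    ∑ i, Gmap n α v R x i = α * (∑ i, x i) ^ 2 + (1 - α) := by
  simp only [Gmap, Pi.add_apply, Pi.smul_apply, smul_eq_mul, Finset.sum_add_distrib,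
    ← Finset.mul_sum, Matrix.sum_mulVec_of_sum_col_eq_one hRs, sum_prod_mul_eq_sq, hv1, mul_one]

theorem eq_one_or_eq_of_mul_sq_add_eq {α s : ℝ} (hα : α ≠ 0) (h : α * s ^ 2 + (1 - α) = s) :
    s = 1 ∨ s = (1 - α) / α := by
  have hfactor : (s - 1) * (α * s - (1 - α)) = 0 := by linear_combination h
  rcases mul_eq_zero.1 hfactor with h1 | h2
  · exact Or.inl (by linarith)
  · exact Or.inr (by field_simp; linarith)

theorem stmt_1_general (n : ℕ) (α : ℝ) (hα : α ∈ Set.Ioo (0:ℝ) 1)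
    (v : Fin n → ℝ) (hv1 : ∑ i, v i = 1)
    (R : Matrix (Fin n) (Fin n × Fin n) ℝ)
    (hRs : ∀ j, ∑ i, R i j = 1)
    (x : Fin n → ℝ) (hx : Gmap n α v R x = x) :
    (∑ i, x i) = 1 ∨ (∑ i, x i) = (1 - α) / α := by
  apply eq_one_or_eq_of_mul_sq_add_eq hα.1.ne'
  rw [← sum_Gmap α v hv1 hRs x, hx]

theorem stmt_1 (n : ℕ) (hn : 1 ≤ n) (α : ℝ) (hα : α ∈ Set.Ioo (0:ℝ) 1)
    (v : Fin n → ℝ) (hv : ∀ i, 0 ≤ v i) (hv1 : ∑ i, v i = 1)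
    (R : Matrix (Fin n) (Fin n × Fin n) ℝ) (hR : ∀ i j, 0 ≤ R i j)
    (hRs : ∀ j, ∑ i, R i j = 1)
    (x : Fin n → ℝ) (hx : Gmap n α v R x = x) :
    (∑ i, x i) = 1 ∨ (∑ i, x i) = (1 - α) / α :=
  stmt_1_general n α hα v hv1 R hRs x hx
end

section
/- If s is a stochastic solution (1ᵀs = 1, s ≥ m) and y = s - m, then y = ((2α-1)/α) · w where w is the Perron vector of the column-stochastic irreducible matrix P_y = α R(y ⊗ I) + G'_m normalized so that 1ᵀw = 1; equivalently, P_y y = y and 1ᵀy = (2α-1)/α. -/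
/-- `w ⊗ I_n` as an `n² × n` matrix. -/
noncomputable def kronL (n : ℕ) (w : Fin n → ℝ) : Matrix (Fin n × Fin n) (Fin n) ℝ :=
  fun p k => w p.1 * (if p.2 = k then 1 else 0)

/-- `I_n ⊗ w` as an `n² × n` matrix. -/
noncomputable def kronR (n : ℕ) (w : Fin n → ℝ) : Matrix (Fin n × Fin n) (Fin n) ℝ :=
  fun p k => (if p.1 = k then 1 else 0) * w p.2

/-- `G'_w = α R (w ⊗ I) + α R (I ⊗ w)`. -/
noncomputable def Gprime (n : ℕ) (α : ℝ) (R : Matrix (Fin n) (Fin n × Fin n) ℝ)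
    (w : Fin n → ℝ) : Matrix (Fin n) (Fin n) ℝ :=
  α • (R * kronL n w) + α • (R * kronR n w)

section Kronecker

variable {n : ℕ} (R : Matrix (Fin n) (Fin n × Fin n) ℝ) (w x : Fin n → ℝ)

theorem mul_kronL_mulVec :
    (R * kronL n w).mulVec x = R.mulVec (fun p => w p.1 * x p.2) := by
  rw [← Matrix.mulVec_mulVec]
  congr 1
  funext p
  simp [kronL, Matrix.mulVec, dotProduct]

theorem mul_kronR_mulVec :
    (R * kronR n w).mulVec x = R.mulVec (fun p => x p.1 * w p.2) := by
  rw [← Matrix.mulVec_mulVec]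
  congr 1
  funext p
  simp [kronR, Matrix.mulVec, dotProduct, mul_comm]

end Kronecker

theorem secant_mulVec_sub_eq_Gmap_sub {n : ℕ} (α : ℝ) (v : Fin n → ℝ)
    (R : Matrix (Fin n) (Fin n × Fin n) ℝ) (s m : Fin n → ℝ) :
    (α • (R * kronL n (s - m)) + Gprime n α R m).mulVec (s - m) =
      Gmap n α v R s - Gmap n α v R m := by
  have polarization :
      (fun p : Fin n × Fin n => (s - m) p.1 * (s - m) p.2) + (fun p => m p.1 * (s - m) p.2) +
          (fun p => (s - m) p.1 * m p.2) =
        (fun p => s p.1 * s p.2) - (fun p => m p.1 * m p.2) := by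
    funext p
    simp only [Pi.add_apply, Pi.sub_apply]
    ring
  simp only [Gprime, Gmap, Matrix.add_mulVec, Matrix.smul_mulVec, mul_kronL_mulVec,
    mul_kronR_mulVec, ← smul_add, ← Matrix.mulVec_add]
  rw [← add_assoc, polarization, Matrix.mulVec_sub, smul_sub]
  abel

theorem stmt_16_general (n : ℕ) (α : ℝ) (hα : α ∈ Set.Ioo (1/2 : ℝ) 1)
    (v : Fin n → ℝ)
    (R : Matrix (Fin n) (Fin n × Fin n) ℝ)
    (m : Fin n → ℝ) (hmfix : Gmap n α v R m = m)
    (hmsum : ∑ i, m i = (1 - α) / α)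
    (s : Fin n → ℝ) (hs : Gmap n α v R s = s) (hs1 : ∑ i, s i = 1) :
    (α • (R * kronL n (s - m)) + Gprime n α R m).mulVec (s - m) = s - m ∧
    ∑ i, (s - m) i = (2 * α - 1) / α := by
  have hα0 : α ≠ 0 := by linarith [hα.1]
  refine ⟨by rw [secant_mulVec_sub_eq_Gmap_sub α v, hs, hmfix], ?_⟩
  simp only [Pi.sub_apply, Finset.sum_sub_distrib, hs1, hmsum]
  field_simp
  ring

theorem stmt_16 (n : ℕ) (hn : 1 ≤ n) (α : ℝ) (hα : α ∈ Set.Ioo (1/2 : ℝ) 1)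
    (v : Fin n → ℝ) (hv : ∀ i, 0 ≤ v i) (hv1 : ∑ i, v i = 1)
    (R : Matrix (Fin n) (Fin n × Fin n) ℝ) (hR : ∀ i j, 0 ≤ R i j)
    (hRs : ∀ j, ∑ i, R i j = 1)
    (m : Fin n → ℝ) (hm0 : ∀ i, 0 ≤ m i) (hmfix : Gmap n α v R m = m)
    (hmin : ∀ z : Fin n → ℝ, (∀ i, 0 ≤ z i) → Gmap n α v R z = z → ∀ i, m i ≤ z i)
    (hmsum : ∑ i, m i = (1 - α) / α)
    (s : Fin n → ℝ) (hs : Gmap n α v R s = s) (hs1 : ∑ i, s i = 1)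
    (hms : ∀ i, m i ≤ s i) :
    (α • (R * kronL n (s - m)) + Gprime n α R m).mulVec (s - m) = s - m ∧
    ∑ i, (s - m) i = (2 * α - 1) / α :=
  stmt_16_general n α hα v R m hmfix hmsum s hs hs1
end
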